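/- Every preference profile with at most three alternatives (and any finite number n of voters) is 2-dimensional Euclidean. -/

import Mathlib

/-- A preference profile, given by a strict linear order `pref i` for each voter `i`
over the alternatives in `A`, is 2-dimensional Euclidean if the alternatives and
voters can be placed in the Euclidean plane such that each voter prefers the
alternative closer to her. -/
def IsEuclidean2D {A V : Type*} (pref : V → A → A → Prop) : Prop :=
  ∃ (EA : A → EuclideanSpace ℝ (Fin 2)) (EV : V → EuclideanSpace ℝ (Fin 2)),
    ∀ (i : V) (a b : A), a ≠ b →
      (pref i a b ↔ dist (EA a) (EV i) < dist (EA b) (EV i))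

/-- The three "vertex" points (0,0), (1,0), (0,1). -/
noncomputable def eucP (j : Fin 3) : EuclideanSpace ℝ (Fin 2) :=
  (WithLp.equiv 2 (Fin 2 → ℝ)).symm ![if j = 1 then 1 else 0, if j = 2 then 1 else 0]

/-- The voter point associated to target values `t`. -/
noncomputable def eucV (t : Fin 3 → ℝ) : EuclideanSpace ℝ (Fin 2) :=
  (WithLp.equiv 2 (Fin 2 → ℝ)).symm ![1/2 + t 0 - t 1, 1/2 + t 0 - t 2]

lemma eucKey (t : Fin 3 → ℝ) (j k : Fin 3) :
    dist (eucP j) (eucV t) < dist (eucP k) (eucV t) ↔ t j < t k := by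
  rw [EuclideanSpace.dist_eq, EuclideanSpace.dist_eq,
    Real.sqrt_lt_sqrt_iff (by positivity)]
  simp only [Fin.sum_univ_two, eucP, eucV, WithLp.equiv_symm_apply, PiLp.toLp_apply,
    Matrix.cons_val_zero, Matrix.cons_val_one, Matrix.head_cons]
  fin_cases j <;> fin_cases k <;> simp [Real.dist_eq, sq_abs] <;>
    (constructor <;> intro h <;> nlinarith [h])


lemma rank_lt_iff {A : Type*} [Fintype A] {r : A → A → Prop}
    (h : IsStrictTotalOrder A r) {a b : A} (hab : a ≠ b) :
    r a b ↔ {c | r c a}.ncard < {c | r c b}.ncard := by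
  have key : ∀ x y : A, r x y → {c | r c x}.ncard < {c | r c y}.ncard := by
    intro x y hxy
    refine Set.ncard_lt_ncard ?_ (Set.toFinite _)
    constructor
    · intro c hc
      exact h.trans c x y hc hxy
    · intro hsub
      have : r x x := hsub hxy
      exact h.irrefl x this
  constructor
  · exact key a b
  · intro hlt
    rcases (by have := h.trichotomous a b; tauto : r a b ∨ a = b ∨ r b a) with hab' | heq | hba
    · exact hab'
    · exact absurd heq hab
    · exact absurd (key b a hba) (by omega)

/-- Every preference profile with at most three alternatives (and any finite number
of voters) is 2-dimensional Euclidean. -/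
theorem three_alternative_profiles_are_2euclidean
    {A V : Type*} [Fintype A] [Fintype V]
    (hA : Fintype.card A ≤ 3)
    (pref : V → A → A → Prop)
    (hpref : ∀ i, IsStrictTotalOrder A (pref i)) :
    IsEuclidean2D pref := by
  classical
  obtain ⟨f⟩ : Nonempty (A ↪ Fin 3) :=
    Function.Embedding.nonempty_of_card_le (by simpa using hA)
  set rank : V → A → ℕ := fun i a => {c | pref i c a}.ncard with hrank
  set s : V → Fin 3 → ℝ := fun i j =>
    ∑ a ∈ Finset.univ.filter (fun a => f a = j), (rank i a : ℝ) with hsdef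
  have hs : ∀ i a, s i (f a) = rank i a := by
    intro i a
    have hfil : Finset.univ.filter (fun b => f b = f a) = {a} := by
      ext b; simp [f.injective.eq_iff]
    simp only [hsdef]; rw [hfil, Finset.sum_singleton]
  refine ⟨fun a => eucP (f a), fun i => eucV (s i), ?_⟩
  intro i a b hab
  rw [eucKey, hs, hs, Nat.cast_lt]
  exact rank_lt_iff (hpref i) hab
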